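/- Suppose the probabilistic forecast F is non-random (a fixed continuous cdf on ℝ). Then F is marginally tail calibrated for Y if and only if x_F = x_Y and lim_{t → x_Y} P(Y > t)/(1 − F(t)) = 1. -/

import Mathlib

open MeasureTheory ProbabilityTheory Filter Set Topology

noncomputable section

/-- Conditional probability of a set given a sub-σ-algebra, as a real-valued function. -/
def condProb {Ω : Type*} {m0 : MeasurableSpace Ω} (μ : Measure Ω) (m : MeasurableSpace Ω)
    (A : Set Ω) : Ω → ℝ :=
  μ[A.indicator (fun _ => (1 : ℝ))|m]

/-- The conditional forecast excess distribution `F_t`. -/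
def excessCdf (F : ℝ → ℝ) (t x : ℝ) : ℝ :=
  if F t < 1 then (F (x + t) - F t) / (1 - F t) else 1

/-- The excess probability integral transform `Z_F^{(t)}`. -/
def excessPIT {Ω : Type*} (F : Ω → ℝ → ℝ) (Y : Ω → ℝ) (t : ℝ) (ω : Ω) : ℝ :=
  excessCdf (F ω) t (Y ω - t)

/-- Upper endpoint `x_Y = sup {x : P(Y ≤ x) < 1}` of the outcome, in `EReal`. -/
def upperEndpoint {Ω : Type*} {mΩ : MeasurableSpace Ω} (μ : Measure Ω) (Y : Ω → ℝ) : EReal :=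
  sSup (Real.toEReal '' {x : ℝ | μ {ω | Y ω ≤ x} < 1})

/-- Upper endpoint of a (deterministic) cdf. -/
def cdfEndpoint (F : ℝ → ℝ) : EReal :=
  sSup (Real.toEReal '' {x : ℝ | F x < 1})

/-- The filter of real `t` tending to an extended-real endpoint `e` from below. -/
def toEndpoint (e : EReal) : Filter ℝ :=
  Filter.comap Real.toEReal (𝓝[<] e)

/-- `F` is a random cdf: measurable in `ω`, and almost surely a continuous cdf. -/
def IsRandomCdf {Ω : Type*} {mΩ : MeasurableSpace Ω} (μ : Measure Ω) (F : Ω → ℝ → ℝ) : Prop :=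
  (∀ x : ℝ, Measurable fun ω => F ω x) ∧
    ∀ᵐ ω ∂μ, Monotone (F ω) ∧ Continuous (F ω) ∧
      Tendsto (F ω) atTop (𝓝 1) ∧ Tendsto (F ω) atBot (𝓝 0)

/-- The endpoint assumption for a sub-σ-algebra `m`: the conditional distribution of `Y`
given `m` has (non-random) upper endpoint `x_Y`. -/
def EndpointAssumption {Ω : Type*} {m0 : MeasurableSpace Ω} (μ : Measure Ω)
    (m : MeasurableSpace Ω) (Y : Ω → ℝ) : Prop :=
  (∀ t : ℝ, (t : EReal) < upperEndpoint μ Y →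
      ∀ᵐ ω ∂μ, 0 < condProb μ m {ω' | t < Y ω'} ω) ∧
    ∀ᵐ ω ∂μ, condProb μ m {ω' | upperEndpoint μ Y < (Y ω' : EReal)} ω = 0

/-- `F` is tail `m`-calibrated for `Y`. -/
def TailCalibrated {Ω : Type*} {m0 : MeasurableSpace Ω} (μ : Measure Ω)
    (m : MeasurableSpace Ω) (F : Ω → ℝ → ℝ) (Y : Ω → ℝ) : Prop :=
  (∀ t : ℝ, (t : EReal) < upperEndpoint μ Y →
      ∀ᵐ ω ∂μ, 0 < (μ[fun ω' => 1 - F ω' t|m]) ω) ∧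
    ∀ u ∈ Icc (0 : ℝ) 1, ∀ᵐ ω ∂μ,
      Tendsto (fun t : ℝ =>
          condProb μ m {ω' | excessPIT F Y t ω' ≤ u ∧ t < Y ω'} ω /
            (μ[fun ω' => 1 - F ω' t|m]) ω)
        (toEndpoint (upperEndpoint μ Y)) (𝓝 u)

/-- `F` is probabilistically tail calibrated for `Y`. -/
def ProbTailCalibrated {Ω : Type*} {mΩ : MeasurableSpace Ω} (μ : Measure Ω)
    (F : Ω → ℝ → ℝ) (Y : Ω → ℝ) : Prop :=
  (∀ t : ℝ, (t : EReal) < upperEndpoint μ Y → 0 < ∫ ω, (1 - F ω t) ∂μ) ∧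
    ∀ u ∈ Icc (0 : ℝ) 1,
      Tendsto (fun t : ℝ =>
          (μ {ω | excessPIT F Y t ω ≤ u ∧ t < Y ω}).toReal / ∫ ω, (1 - F ω t) ∂μ)
        (toEndpoint (upperEndpoint μ Y)) (𝓝 u)

/-- `F` is marginally tail calibrated for `Y`. -/
def MargTailCalibrated {Ω : Type*} {mΩ : MeasurableSpace Ω} (μ : Measure Ω)
    (F : Ω → ℝ → ℝ) (Y : Ω → ℝ) : Prop :=
  (∀ t : ℝ, (t : EReal) < upperEndpoint μ Y → 0 < ∫ ω, (1 - F ω t) ∂μ) ∧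
    Tendsto (fun t : ℝ =>
        ⨆ x : Ici (0 : ℝ),
          |(μ {ω | t < Y ω ∧ Y ω ≤ t + (x : ℝ)}).toReal / (∫ ω, (1 - F ω t) ∂μ) -
            (∫ ω in {ω' | t < Y ω'}, excessCdf (F ω) t (x : ℝ) ∂μ) /
              (μ {ω' | t < Y ω'}).toReal|)
      (toEndpoint (upperEndpoint μ Y)) (𝓝 0)

/-- Generalized Pareto survival function `(1 + ξ x)₊^(-1/ξ)` with unit scale and shape `ξ`,
interpreted as `exp (-x)` when `ξ = 0`. -/
def gpdSurv (ξ x : ℝ) : ℝ :=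
  if ξ = 0 then Real.exp (-x) else (max (1 + ξ * x) 0) ^ (-(1 : ℝ) / ξ)

/-! For a non-random forecast everything is a statement about two cdfs, the law `H` of `Y` and
`F`. With `d = F - H`, the term of the supremum at threshold `t` and shift `x` is
`(d t - d (t + x)) / (1 - F t)`, while `P(Y > t) / (1 - F t) - 1 = d t / (1 - F t)`.
Letting `x → ∞` bounds the latter by the supremum; a point `c > x_Y` with `F c < 1` would keep
the supremum above `(1 - F c) / 2`. Conversely, if `d s / (1 - F s)` is small on `[t, x_Y)` and
both cdfs equal `1` beyond the common endpoint, the supremum is small. -/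

section CdfEndpoint

variable {f : ℝ → ℝ}

lemma coe_lt_cdfEndpoint_iff (hmono : Monotone f)
    (hright : ∀ x, ContinuousWithinAt f (Ici x) x) {t : ℝ} :
    (t : EReal) < cdfEndpoint f ↔ f t < 1 := by
  constructor
  · intro ht
    obtain ⟨_, ⟨c, hc, rfl⟩, htc⟩ := lt_sSup_iff.mp ht
    exact (hmono (EReal.coe_lt_coe_iff.mp htc).le).trans_lt hc
  · intro ht
    have hnear : ∀ᶠ u in 𝓝[>] t, f u < 1 :=
      ((hright t).eventually (gt_mem_nhds ht)).filter_mono (nhdsWithin_mono _ Ioi_subset_Ici_self)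
    obtain ⟨u, hu, htu⟩ := (hnear.and self_mem_nhdsWithin).exists
    exact (EReal.coe_lt_coe_iff.mpr htu).trans_le (le_sSup ⟨u, hu, rfl⟩)

lemma eq_one_of_cdfEndpoint_le (hmono : Monotone f)
    (hright : ∀ x, ContinuousWithinAt f (Ici x) x) (hle : ∀ x, f x ≤ 1) {t : ℝ}
    (ht : cdfEndpoint f ≤ t) : f t = 1 :=
  (hle t).eq_of_not_lt fun h => ht.not_gt ((coe_lt_cdfEndpoint_iff hmono hright).mpr h)

lemma bot_lt_cdfEndpoint (hbot : Tendsto f atBot (𝓝 0)) : ⊥ < cdfEndpoint f := by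
  obtain ⟨t, ht⟩ := (hbot.eventually (gt_mem_nhds zero_lt_one)).exists
  exact (EReal.bot_lt_coe t).trans_le (le_sSup ⟨t, ht, rfl⟩)

end CdfEndpoint

section ToEndpoint

variable {e : EReal}

lemma toEndpoint_hasBasis (he : ⊥ < e) :
    (toEndpoint e).HasBasis (fun a : ℝ => (a : EReal) < e)
      fun a => {t : ℝ | a < t ∧ (t : EReal) < e} := by
  have hbasis := (nhdsLT_basis_of_exists_lt ⟨⊥, he⟩).comap Real.toEReal
  refine hbasis.to_hasBasis (fun l hl => ?_) fun a ha => ⟨a, ha, fun t ht => ?_⟩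
  · obtain ⟨a, hla, hae⟩ := EReal.lt_iff_exists_real_btwn.mp hl
    exact ⟨a, hae, fun t ht => ⟨hla.trans (EReal.coe_lt_coe_iff.mpr ht.1), ht.2⟩⟩
  · exact ⟨EReal.coe_lt_coe_iff.mp ht.1, ht.2⟩

lemma toEndpoint_neBot (he : ⊥ < e) : (toEndpoint e).NeBot :=
  (toEndpoint_hasBasis he).neBot_iff.mpr fun {a} ha => by
    obtain ⟨t, hat, hte⟩ := EReal.lt_iff_exists_real_btwn.mp ha
    exact ⟨t, EReal.coe_lt_coe_iff.mp hat, hte⟩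

lemma eventually_lt_toEndpoint (e : EReal) : ∀ᶠ t : ℝ in toEndpoint e, (t : EReal) < e :=
  preimage_mem_comap self_mem_nhdsWithin

lemma eventually_forall_toEndpoint (he : ⊥ < e) {p : ℝ → Prop}
    (h : ∀ᶠ t in toEndpoint e, p t) :
    ∀ᶠ t in toEndpoint e, ∀ s : ℝ, t ≤ s → (s : EReal) < e → p s := by
  obtain ⟨a, ha, hp⟩ := (toEndpoint_hasBasis he).eventually_iff.mp h
  exact (toEndpoint_hasBasis he).eventually_iff.mpr
    ⟨a, ha, fun t ht s hts hse => hp ⟨ht.1.trans_le hts, hse⟩⟩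

end ToEndpoint

/-- The supremum in the definition of marginal tail calibration, when the forecast `F` is
non-random and the outcome has cdf `H`. -/
def tailDiscrepancy (H F : ℝ → ℝ) (t : ℝ) : ℝ :=
  ⨆ x : Ici (0 : ℝ), |(H (t + x) - H t) / (1 - F t) - excessCdf F t x|

section TailDiscrepancy

variable {H F : ℝ → ℝ} {t : ℝ}

lemma div_sub_excessCdf_eq (hFt : F t < 1) (x : ℝ) :
    (H (t + x) - H t) / (1 - F t) - excessCdf F t x =
      ((F t - H t) - (F (t + x) - H (t + x))) / (1 - F t) := by
  rw [excessCdf, if_pos hFt, add_comm x t, div_sub_div_same]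
  ring_nf

lemma tailDiscrepancy_nonneg : 0 ≤ tailDiscrepancy H F t :=
  Real.iSup_nonneg fun _ => abs_nonneg _

lemma le_tailDiscrepancy (hH : ∀ x, H x ∈ Icc 0 1) (hF : ∀ x, F x ∈ Icc 0 1)
    (hFt : F t < 1) {x : ℝ} (hx : 0 ≤ x) :
    |(F t - H t) - (F (t + x) - H (t + x))| / (1 - F t) ≤ tailDiscrepancy H F t := by
  have hpos : 0 < 1 - F t := sub_pos.mpr hFt
  have hbdd : BddAbove (range fun x : Ici (0 : ℝ) =>
      |(H (t + x) - H t) / (1 - F t) - excessCdf F t x|) := by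
    refine ⟨2 / (1 - F t), forall_mem_range.mpr fun x => ?_⟩
    rw [div_sub_excessCdf_eq hFt, abs_div, abs_of_pos hpos]
    gcongr
    obtain ⟨hH0, hH1⟩ := hH t
    obtain ⟨hHx0, hHx1⟩ := hH (t + x)
    obtain ⟨hF0, hF1⟩ := hF t
    obtain ⟨hFx0, hFx1⟩ := hF (t + x)
    rw [abs_le]
    constructor <;> linarith
  have := le_ciSup hbdd ⟨x, hx⟩
  rwa [div_sub_excessCdf_eq hFt, abs_div, abs_of_pos hpos] at this

lemma tailDiscrepancy_le (hFt : F t < 1) {c : ℝ}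
    (h : ∀ x, 0 ≤ x → |(F t - H t) - (F (t + x) - H (t + x))| ≤ c * (1 - F t)) :
    tailDiscrepancy H F t ≤ c := by
  have hpos : 0 < 1 - F t := sub_pos.mpr hFt
  refine ciSup_le fun x => ?_
  rw [div_sub_excessCdf_eq hFt, abs_div, abs_of_pos hpos, div_le_iff₀ hpos]
  exact h x x.2

lemma abs_sub_div_le_tailDiscrepancy (hH : ∀ x, H x ∈ Icc 0 1) (hF : ∀ x, F x ∈ Icc 0 1)
    (hHtop : Tendsto H atTop (𝓝 1)) (hFtop : Tendsto F atTop (𝓝 1)) (hFt : F t < 1) :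
    |F t - H t| / (1 - F t) ≤ tailDiscrepancy H F t := by
  have hshift : Tendsto (fun x => F (t + x) - H (t + x)) atTop (𝓝 0) := by
    have := (hFtop.sub hHtop).comp (tendsto_atTop_add_const_left _ t tendsto_id)
    rwa [sub_self] at this
  have hlim : Tendsto (fun x => |(F t - H t) - (F (t + x) - H (t + x))| / (1 - F t)) atTop
      (𝓝 (|F t - H t| / (1 - F t))) := by
    simpa using ((tendsto_const_nhds.sub hshift).abs.div_const _)
  exact le_of_tendsto hlim <|
    (eventually_ge_atTop 0).mono fun x hx => le_tailDiscrepancy hH hF hFt hx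

lemma cdfEndpoint_le_of_tendsto_tailDiscrepancy (hHmono : Monotone H)
    (hHright : ∀ x, ContinuousWithinAt H (Ici x) x) (hH : ∀ x, H x ∈ Icc 0 1)
    (hHbot : Tendsto H atBot (𝓝 0)) (hHtop : Tendsto H atTop (𝓝 1))
    (hF : ∀ x, F x ∈ Icc 0 1) (hFtop : Tendsto F atTop (𝓝 1))
    (hFlt : ∀ t : ℝ, (t : EReal) < cdfEndpoint H → F t < 1)
    (hD : Tendsto (tailDiscrepancy H F) (toEndpoint (cdfEndpoint H)) (𝓝 0)) :
    cdfEndpoint F ≤ cdfEndpoint H := by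
  refine sSup_le ?_
  rintro _ ⟨c, hFc : F c < 1, rfl⟩
  by_contra! hHc
  have hHc1 : H c = 1 := eq_one_of_cdfEndpoint_le hHmono hHright (fun x => (hH x).2) hHc.le
  have := toEndpoint_neBot (bot_lt_cdfEndpoint hHbot)
  have hgap : ∀ᶠ t in toEndpoint (cdfEndpoint H), 1 - F c ≤ 2 * tailDiscrepancy H F t := by
    filter_upwards [eventually_lt_toEndpoint _] with t ht
    have hFt := hFlt t ht
    have hpos : 0 < 1 - F t := sub_pos.mpr hFt
    have htc : t ≤ c := EReal.coe_le_coe_iff.mp (ht.trans hHc).le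
    have hinc := le_tailDiscrepancy hH hF hFt (sub_nonneg.mpr htc)
    have hrat := abs_sub_div_le_tailDiscrepancy hH hF hHtop hFtop hFt
    rw [add_sub_cancel, hHc1, div_le_iff₀ hpos] at hinc
    rw [div_le_iff₀ hpos] at hrat
    have hF1 : 1 - F t ≤ 1 := by linarith [(hF t).1]
    have hD0 : 0 ≤ tailDiscrepancy H F t := tailDiscrepancy_nonneg
    calc 1 - F c = |(F t - H t) - ((F t - H t) - (F c - 1))| := by
          rw [sub_sub_cancel, abs_sub_comm, abs_of_pos (sub_pos.mpr hFc)]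
      _ ≤ |F t - H t| + |(F t - H t) - (F c - 1)| := abs_sub _ _
      _ ≤ 2 * tailDiscrepancy H F t := by nlinarith
  linarith [ge_of_tendsto (hD.const_mul 2) hgap]

lemma tendsto_tailDiscrepancy_of_tendsto_div (hHmono : Monotone H)
    (hHright : ∀ x, ContinuousWithinAt H (Ici x) x) (hH1 : ∀ x, H x ≤ 1)
    (hHbot : Tendsto H atBot (𝓝 0)) (hFmono : Monotone F)
    (hFright : ∀ x, ContinuousWithinAt F (Ici x) x) (hF1 : ∀ x, F x ≤ 1)
    (hend : cdfEndpoint F = cdfEndpoint H)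
    (hratio : Tendsto (fun t => (1 - H t) / (1 - F t)) (toEndpoint (cdfEndpoint H)) (𝓝 1)) :
    Tendsto (tailDiscrepancy H F) (toEndpoint (cdfEndpoint H)) (𝓝 0) := by
  set e := cdfEndpoint H
  have hFlt : ∀ t : ℝ, (t : EReal) < e → F t < 1 := fun t ht =>
    (coe_lt_cdfEndpoint_iff hFmono hFright).mp (hend ▸ ht)
  rw [Metric.tendsto_nhds]
  intro ε hε
  have hclose : ∀ᶠ t in toEndpoint e, |F t - H t| ≤ ε / 4 * (1 - F t) := by
    filter_upwards [Metric.tendsto_nhds.mp hratio (ε / 4) (by positivity),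
      eventually_lt_toEndpoint e] with t hdist hte
    have hpos : 0 < 1 - F t := sub_pos.mpr (hFlt t hte)
    rw [Real.dist_eq, div_sub_one hpos.ne', abs_div, abs_of_pos hpos, div_lt_iff₀ hpos,
      sub_sub_sub_cancel_left] at hdist
    exact hdist.le
  filter_upwards [eventually_forall_toEndpoint (bot_lt_cdfEndpoint hHbot) hclose,
    eventually_lt_toEndpoint e] with t hclose' hte
  have hFt := hFlt t hte
  have hD : tailDiscrepancy H F t ≤ ε / 2 := by
    refine tailDiscrepancy_le hFt fun x hx => ?_
    have hshift : |F (t + x) - H (t + x)| ≤ ε / 4 * (1 - F t) := by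
      rcases lt_or_ge ((t + x : ℝ) : EReal) e with hlt | hge
      · refine (hclose' _ (by linarith) hlt).trans ?_
        gcongr
        exact hFmono (by linarith)
      · rw [eq_one_of_cdfEndpoint_le hFmono hFright hF1 (hend ▸ hge),
          eq_one_of_cdfEndpoint_le hHmono hHright hH1 hge, sub_self, abs_zero]
        have := sub_pos.mpr hFt
        positivity
    calc |(F t - H t) - (F (t + x) - H (t + x))|
        ≤ |F t - H t| + |F (t + x) - H (t + x)| := abs_sub _ _
      _ ≤ ε / 4 * (1 - F t) + ε / 4 * (1 - F t) := add_le_add (hclose' t le_rfl hte) hshift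
      _ = ε / 2 * (1 - F t) := by ring
  rw [Real.dist_eq, sub_zero, abs_of_nonneg tailDiscrepancy_nonneg]
  linarith

theorem tendsto_tailDiscrepancy_iff (hHmono : Monotone H)
    (hHright : ∀ x, ContinuousWithinAt H (Ici x) x) (hHbot : Tendsto H atBot (𝓝 0))
    (hHtop : Tendsto H atTop (𝓝 1)) (hFmono : Monotone F)
    (hFright : ∀ x, ContinuousWithinAt F (Ici x) x) (hFbot : Tendsto F atBot (𝓝 0))
    (hFtop : Tendsto F atTop (𝓝 1)) :
    ((∀ t : ℝ, (t : EReal) < cdfEndpoint H → F t < 1) ∧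
        Tendsto (tailDiscrepancy H F) (toEndpoint (cdfEndpoint H)) (𝓝 0)) ↔
      cdfEndpoint F = cdfEndpoint H ∧
        Tendsto (fun t => (1 - H t) / (1 - F t)) (toEndpoint (cdfEndpoint H)) (𝓝 1) := by
  have hH : ∀ x, H x ∈ Icc 0 1 := fun x =>
    ⟨hHmono.le_of_tendsto hHbot x, hHmono.ge_of_tendsto hHtop x⟩
  have hF : ∀ x, F x ∈ Icc 0 1 := fun x =>
    ⟨hFmono.le_of_tendsto hFbot x, hFmono.ge_of_tendsto hFtop x⟩
  constructor
  · rintro ⟨hFlt, hD⟩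
    refine ⟨(cdfEndpoint_le_of_tendsto_tailDiscrepancy hHmono hHright hH hHbot hHtop hF hFtop
      hFlt hD).antisymm ?_, ?_⟩
    · exact sSup_le_sSup <| Set.image_mono fun t ht =>
        hFlt t ((coe_lt_cdfEndpoint_iff hHmono hHright).mpr ht)
    · rw [← tendsto_sub_nhds_zero_iff]
      refine squeeze_zero_norm' ?_ hD
      filter_upwards [eventually_lt_toEndpoint _] with t ht
      have hpos : 0 < 1 - F t := sub_pos.mpr (hFlt t ht)
      rw [Real.norm_eq_abs, div_sub_one hpos.ne', sub_sub_sub_cancel_left, abs_div,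
        abs_of_pos hpos]
      exact abs_sub_div_le_tailDiscrepancy hH hF hHtop hFtop (hFlt t ht)
  · rintro ⟨hend, hratio⟩
    exact ⟨fun t ht => (coe_lt_cdfEndpoint_iff hFmono hFright).mp (hend ▸ ht),
      tendsto_tailDiscrepancy_of_tendsto_div hHmono hHright (fun x => (hH x).2) hHbot hFmono
        hFright (fun x => (hF x).2) hend hratio⟩

end TailDiscrepancy

section Outcome

variable {Ω : Type*} {m0 : MeasurableSpace Ω} {μ : Measure Ω} [IsProbabilityMeasure μ]
  {Y : Ω → ℝ}

lemma upperEndpoint_eq_cdfEndpoint (hY : Measurable Y) :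
    upperEndpoint μ Y = cdfEndpoint (cdf (μ.map Y)) := by
  have := Measure.isProbabilityMeasure_map (μ := μ) hY.aemeasurable
  have hle : ∀ x, μ {ω | Y ω ≤ x} = ENNReal.ofReal (cdf (μ.map Y) x) := fun x => by
    rw [ofReal_cdf, Measure.map_apply hY measurableSet_Iic]
    rfl
  simp_rw [upperEndpoint, cdfEndpoint, hle, ENNReal.ofReal_lt_one]

lemma measureReal_lt_eq_one_sub_cdf (hY : Measurable Y) (t : ℝ) :
    μ.real {ω | t < Y ω} = 1 - cdf (μ.map Y) t := by
  have := Measure.isProbabilityMeasure_map (μ := μ) hY.aemeasurable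
  rw [cdf_eq_real, map_measureReal_apply hY measurableSet_Iic, ← probReal_compl_eq_one_sub
    (hY measurableSet_Iic)]
  congr 1
  ext ω
  simp

lemma measureReal_lt_le_eq_cdf_sub_cdf (hY : Measurable Y) {a b : ℝ} (hab : a ≤ b) :
    μ.real {ω | a < Y ω ∧ Y ω ≤ b} = cdf (μ.map Y) b - cdf (μ.map Y) a := by
  have := Measure.isProbabilityMeasure_map (μ := μ) hY.aemeasurable
  rw [cdf_eq_real, cdf_eq_real, ← measureReal_sdiff (Iic_subset_Iic.mpr hab) measurableSet_Iic,
    Iic_sdiff_Iic, map_measureReal_apply hY measurableSet_Ioc]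
  rfl

lemma margTailCalibrated_const_iff (hY : Measurable Y) (F : ℝ → ℝ) :
    MargTailCalibrated μ (fun _ => F) Y ↔
      (∀ t : ℝ, (t : EReal) < upperEndpoint μ Y → F t < 1) ∧
        Tendsto (tailDiscrepancy (cdf (μ.map Y)) F) (toEndpoint (upperEndpoint μ Y))
          (𝓝 0) := by
  simp only [MargTailCalibrated, integral_const, probReal_univ, one_mul, sub_pos,
    measureReal_restrict_apply_univ, smul_eq_mul]
  refine and_congr_right fun _ => tendsto_congr' ?_
  filter_upwards [eventually_lt_toEndpoint _] with t ht
  have hpos : μ.real {ω | t < Y ω} ≠ 0 := by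
    rw [upperEndpoint_eq_cdfEndpoint hY,
      coe_lt_cdfEndpoint_iff (cdf _).mono (cdf _).right_continuous] at ht
    rw [measureReal_lt_eq_one_sub_cdf hY]
    linarith
  refine iSup_congr fun x => ?_
  rw [← measureReal_def, ← measureReal_def, mul_div_cancel_left₀ _ hpos,
    measureReal_lt_le_eq_cdf_sub_cdf hY (le_add_of_nonneg_right x.2)]

end Outcome

/-- a non-random continuous forecast cdf is marginally tail calibrated for `Y`
if and only if `x_F = x_Y` and `P(Y > t)/(1 - F(t)) → 1` as `t → x_Y`. -/
theorem margTailCalibrated_iff_of_nonrandom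
    {Ω : Type*} {m0 : MeasurableSpace Ω} (μ : Measure Ω) [IsProbabilityMeasure μ]
    (Y : Ω → ℝ) (hY : Measurable Y)
    (F : ℝ → ℝ) (hFmono : Monotone F) (hFcont : Continuous F)
    (hFtop : Tendsto F atTop (𝓝 1)) (hFbot : Tendsto F atBot (𝓝 0)) :
    MargTailCalibrated μ (fun _ => F) Y ↔
      (cdfEndpoint F = upperEndpoint μ Y ∧
        Tendsto (fun t : ℝ => (μ {ω | t < Y ω}).toReal / (1 - F t))
          (toEndpoint (upperEndpoint μ Y)) (𝓝 1)) := by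
  simp_rw [← measureReal_def, measureReal_lt_eq_one_sub_cdf hY, margTailCalibrated_const_iff hY,
    upperEndpoint_eq_cdfEndpoint hY]
  exact tendsto_tailDiscrepancy_iff (cdf _).mono (cdf _).right_continuous (tendsto_cdf_atBot _)
    (tendsto_cdf_atTop _) hFmono (fun x => hFcont.continuousWithinAt) hFbot hFtop
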